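/- arXiv:2503.07447 — 4 statements merged into one kernel-verified Lean document; each statement's English description precedes it below -/
import Mathlib

section
/- For real numbers x, y with 0 < x < 1 and 0 < y < 1, the Kullback-Leibler divergence D(x‖y) = x·log(x/y) + (1−x)·log((1−x)/(1−y)) satisfies D(x‖y) ≥ 3(x−y)²/(2x+4y). -/
/-!
Fix `x` and compare `t ↦ D(x‖t)` with `t ↦ 3 (x - t)² / (2x + 4t)`: both vanish at `t = x`, and
the derivative of their difference is `(t - x) (1 / (t (1 - t)) - 6 (4x + 2t) / (2x + 4t)²)`.
The bracket is nonnegative by the identity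
`(2x + 4t)² - 6 (4x + 2t) t (1 - t) = 4 (x - t)² + 12 t² (2x + t)`,
so the difference decreases before `x` and increases after it, hence is minimal at `t = x`.
-/

open Real Set

theorem Convex.isMinOn_of_hasDerivAt_of_sub_mul_nonneg {s : Set ℝ} (hs : Convex ℝ s)
    {f f' : ℝ → ℝ} {x : ℝ} (hx : x ∈ s) (hf : ∀ t ∈ s, HasDerivAt f (f' t) t)
    (hsign : ∀ t ∈ s, 0 ≤ (t - x) * f' t) : IsMinOn f s x := by
  intro y hy
  have hcont : ∀ {a b}, a ∈ s → b ∈ s → ContinuousOn f (Icc a b) := fun ha hb t ht =>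
    (hf t (hs.ordConnected.out ha hb ht)).continuousAt.continuousWithinAt
  have hderiv : ∀ {a b}, a ∈ s → b ∈ s → ∀ t ∈ interior (Icc a b),
      HasDerivWithinAt f (f' t) (interior (Icc a b)) t := fun ha hb t ht =>
    (hf t (hs.ordConnected.out ha hb (interior_subset ht))).hasDerivWithinAt
  rcases le_total x y with hxy | hyx
  · refine monotoneOn_of_hasDerivWithinAt_nonneg (convex_Icc x y) (hcont hx hy) (hderiv hx hy)
      (fun t ht => ?_) (left_mem_Icc.2 hxy) (right_mem_Icc.2 hxy) hxy
    rw [interior_Icc] at ht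
    exact nonneg_of_mul_nonneg_right
      (hsign t (hs.ordConnected.out hx hy (Ioo_subset_Icc_self ht))) (sub_pos.2 ht.1)
  · refine antitoneOn_of_hasDerivWithinAt_nonpos (convex_Icc y x) (hcont hy hx) (hderiv hy hx)
      (fun t ht => ?_) (left_mem_Icc.2 hyx) (right_mem_Icc.2 hyx) hyx
    rw [interior_Icc] at ht
    exact nonpos_of_mul_nonneg_right
      (hsign t (hs.ordConnected.out hy hx (Ioo_subset_Icc_self ht))) (sub_neg.2 ht.2)

theorem div_sq_le_one_div_mul_one_sub {x t : ℝ} (hx : 0 ≤ x) (ht0 : 0 < t) (ht1 : t < 1) :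
    6 * (4 * x + 2 * t) / (2 * x + 4 * t) ^ 2 ≤ 1 / (t * (1 - t)) := by
  rw [div_le_div_iff₀ (by positivity) (mul_pos ht0 (sub_pos.2 ht1))]
  have key : (2 * x + 4 * t) ^ 2 - 6 * (4 * x + 2 * t) * (t * (1 - t)) =
      4 * (x - t) ^ 2 + 12 * t ^ 2 * (2 * x + t) := by ring
  linarith [sq_nonneg (x - t), mul_nonneg (sq_nonneg t) (by positivity : 0 ≤ 2 * x + t)]

theorem hasDerivAt_binaryKL_sub_quadratic {x t : ℝ} (ht0 : 0 < t) (ht1 : t < 1)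
    (hden : 2 * x + 4 * t ≠ 0) :
    HasDerivAt (fun t => x * (log x - log t) + (1 - x) * (log (1 - x) - log (1 - t)) -
        3 * (x - t) ^ 2 / (2 * x + 4 * t))
      ((t - x) * (1 / (t * (1 - t)) - 6 * (4 * x + 2 * t) / (2 * x + 4 * t) ^ 2)) t := by
  have hlog : HasDerivAt (fun t => log t) t⁻¹ t := hasDerivAt_log ht0.ne'
  have hlog_one_sub : HasDerivAt (fun t => log (1 - t)) (-(1 - t)⁻¹) t := by
    simpa [Function.comp_def] using
      (hasDerivAt_log (sub_ne_zero.2 ht1.ne')).comp t ((hasDerivAt_id t).const_sub 1)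
  have hnum : HasDerivAt (fun t => 3 * (x - t) ^ 2) (3 * (2 * (x - t) * -1)) t := by
    simpa using (((hasDerivAt_id t).const_sub x).pow 2).const_mul 3
  have hden' : HasDerivAt (fun t => 2 * x + 4 * t) 4 t := by
    simpa using ((hasDerivAt_id t).const_mul 4).const_add (2 * x)
  refine ((((hlog.const_sub (log x)).const_mul x).add
    ((hlog_one_sub.const_sub (log (1 - x))).const_mul (1 - x))).sub
      (hnum.div hden' hden)).congr_deriv ?_
  have : 1 - t ≠ 0 := sub_ne_zero.2 ht1.ne'
  field_simp
  ring

theorem kl_div_lower_bound (x y : ℝ) (hx0 : 0 < x) (hx1 : x < 1)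
    (hy0 : 0 < y) (hy1 : y < 1) :
    x * Real.log (x / y) + (1 - x) * Real.log ((1 - x) / (1 - y)) ≥
      3 * (x - y) ^ 2 / (2 * x + 4 * y) := by
  have hmin := (convex_Ioo (0 : ℝ) 1).isMinOn_of_hasDerivAt_of_sub_mul_nonneg ⟨hx0, hx1⟩
    (fun t ht => hasDerivAt_binaryKL_sub_quadratic (x := x) ht.1 ht.2 (by linarith [ht.1]))
    (fun t ⟨ht0, ht1⟩ => by
      rw [← mul_assoc, ← sq]
      exact mul_nonneg (sq_nonneg _)
        (sub_nonneg.2 (div_sq_le_one_div_mul_one_sub hx0.le ht0 ht1)))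
    (show y ∈ Ioo 0 1 from ⟨hy0, hy1⟩)
  rw [ge_iff_le, log_div hx0.ne' hy0.ne', log_div (by linarith) (by linarith)]
  simpa using hmin
end

section
/- Let X ~ Bin(n, p) and t ≥ e·p·n. Then P(X > t) ≤ 2·(e·p·n/t)^t. -/
/-! Chernoff's method: by Markov's inequality applied to `x ^ X` with `x = t / (p n) ≥ 1`,
`P(X > t) ≤ E[x ^ X] / x ^ t = (1 + p (x - 1)) ^ n / x ^ t ≤ exp (p n (x - 1)) / x ^ t`,
which for this `x` equals `exp (-p n) * (e p n / t) ^ t`. -/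

open Finset Real

theorem sum_filter_lt_le_sum_mul_pow_div (s : Finset ℕ) (w : ℕ → ℝ) (hw : ∀ k ∈ s, 0 ≤ w k)
    (t x : ℝ) (hx : 1 ≤ x) :
    ∑ k ∈ s.filter (fun k : ℕ => t < k), w k ≤ (∑ k ∈ s, w k * x ^ k) / x ^ t := by
  have hxt : 0 < x ^ t := rpow_pos_of_pos (by linarith) t
  rw [sum_div]
  calc ∑ k ∈ s.filter (fun k : ℕ => t < k), w k
      ≤ ∑ k ∈ s.filter (fun k : ℕ => t < k), w k * x ^ k / x ^ t := by
        refine sum_le_sum fun k hk => ?_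
        obtain ⟨hks, htk⟩ := mem_filter.mp hk
        have hpow : x ^ t ≤ x ^ k := by
          rw [← rpow_natCast]; exact rpow_le_rpow_of_exponent_le hx htk.le
        rw [mul_div_assoc]
        exact le_mul_of_one_le_right (hw k hks) ((one_le_div hxt).mpr hpow)
    _ ≤ ∑ k ∈ s, w k * x ^ k / x ^ t :=
        sum_le_sum_of_subset_of_nonneg (filter_subset _ _) fun k hk _ => by
          have := hw k hk
          positivity

theorem sum_binomial_mul_pow (n : ℕ) (p x : ℝ) :
    ∑ k ∈ range (n + 1), (n.choose k : ℝ) * p ^ k * (1 - p) ^ (n - k) * x ^ k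
      = (1 + p * (x - 1)) ^ n := by
  rw [show 1 + p * (x - 1) = p * x + (1 - p) by ring, add_pow]
  refine sum_congr rfl fun k _ => ?_
  ring

theorem one_add_mul_sub_one_pow_le_exp (n : ℕ) {p x : ℝ} (hp0 : 0 ≤ p) (hp1 : p ≤ 1)
    (hx : 0 ≤ x) : (1 + p * (x - 1)) ^ n ≤ exp (p * n * (x - 1)) := by
  rw [show p * n * (x - 1) = n * (p * (x - 1)) by ring, exp_nat_mul]
  gcongr
  · nlinarith
  · linarith [add_one_le_exp (p * (x - 1))]

theorem binomial_tail_le_exp_div_rpow (n : ℕ) {p : ℝ} (hp0 : 0 ≤ p) (hp1 : p ≤ 1)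
    (t : ℝ) {x : ℝ} (hx : 1 ≤ x) :
    ∑ k ∈ (range (n + 1)).filter (fun k : ℕ => t < k),
      (n.choose k : ℝ) * p ^ k * (1 - p) ^ (n - k) ≤ exp (p * n * (x - 1)) / x ^ t := by
  refine (sum_filter_lt_le_sum_mul_pow_div _ _ (fun k _ => ?_) t x hx).trans ?_
  · have : 0 ≤ 1 - p := by linarith
    positivity
  · rw [sum_binomial_mul_pow]
    gcongr
    exact one_add_mul_sub_one_pow_le_exp n hp0 hp1 (by linarith)

theorem binomial_tail_le_chernoff (n : ℕ) {p : ℝ} (hp0 : 0 ≤ p) (hp1 : p ≤ 1) {t : ℝ}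
    (hpn : 0 < p * n) (ht : p * n ≤ t) :
    ∑ k ∈ (range (n + 1)).filter (fun k : ℕ => t < k),
      (n.choose k : ℝ) * p ^ k * (1 - p) ^ (n - k)
      ≤ exp (-(p * n)) * (exp 1 * p * n / t) ^ t := by
  have ht0 : 0 < t := hpn.trans_le ht
  refine (binomial_tail_le_exp_div_rpow n hp0 hp1 t (x := t / (p * n))
    ((one_le_div hpn).mpr ht)).trans_eq ?_
  have hexp : p * n * (t / (p * n) - 1) = -(p * n) + t := by
    rw [mul_sub, mul_div_cancel₀ _ hpn.ne']; ring
  rw [hexp, exp_add, show exp 1 * p * n / t = exp 1 * (p * n / t) by ring,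
    mul_rpow (exp_pos 1).le (by positivity), exp_one_rpow, div_rpow hpn.le ht0.le,
    div_rpow ht0.le hpn.le]
  field_simp

theorem binomial_tail_eq_zero_of_mul_eq_zero (n : ℕ) {p t : ℝ} (hpn : p * n = 0) (ht : 0 ≤ t) :
    ∑ k ∈ (range (n + 1)).filter (fun k : ℕ => t < k),
      (n.choose k : ℝ) * p ^ k * (1 - p) ^ (n - k) = 0 := by
  refine sum_eq_zero fun k hk => ?_
  obtain ⟨hkn, htk⟩ := mem_filter.mp hk
  have hk : k ≠ 0 := by rintro rfl; rw [Nat.cast_zero] at htk; linarith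
  have hp : p = 0 := by
    have : (n : ℝ) ≠ 0 := by norm_cast; have := mem_range.mp hkn; omega
    simpa [this] using hpn
  simp [hp, hk]

open Finset in
theorem binomial_poisson_tail (n : ℕ) (p : ℝ) (hp0 : 0 ≤ p) (hp1 : p ≤ 1)
    (t : ℝ) (ht : Real.exp 1 * p * n ≤ t) (ht0 : 0 < t) :
    ∑ k ∈ (Finset.range (n + 1)).filter (fun k : ℕ => (k : ℝ) > t),
      (n.choose k : ℝ) * p ^ k * (1 - p) ^ (n - k)
      ≤ 2 * (Real.exp 1 * p * n / t) ^ t := by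
  have hpn0 : 0 ≤ p * n := by positivity
  rcases hpn0.eq_or_lt with hpn | hpn
  · rw [binomial_tail_eq_zero_of_mul_eq_zero n hpn.symm ht0.le]
    positivity
  have hpnt : p * n ≤ t := by
    refine le_trans ?_ ht
    rw [mul_assoc]
    exact le_mul_of_one_le_left hpn0 (one_le_exp zero_le_one)
  calc _ ≤ exp (-(p * n)) * (exp 1 * p * n / t) ^ t :=
        binomial_tail_le_chernoff n hp0 hp1 hpn hpnt
    _ ≤ 2 * (exp 1 * p * n / t) ^ t := by
        gcongr
        exact (exp_le_one_iff.mpr (neg_nonpos.mpr hpn0)).trans one_le_two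
end

section
/- For every K > 0 there exists a constant f₀(K) > 0 such that for all real x, y with |x| ≤ K, |y| ≤ K: Φ(x) + Φ(y) ≥ 1 + f₀(K)·(x + y) whenever x + y ≥ 0, where Φ is the standard normal CDF. -/
/-! On `[-K, K]` the Gaussian density is at least `exp (-K² / 2) / √(2π)`, so `Φ` grows at least
linearly there. By symmetry `Φ x + Φ y - 1 = Φ x - Φ (-y)`, and `-y ≤ x` both lie in `[-K, K]`. -/

open MeasureTheory

noncomputable def stdGaussianCDF (x : ℝ) : ℝ :=
  (∫ t in Set.Iic x, Real.exp (-(t ^ 2) / 2)) / Real.sqrt (2 * Real.pi)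

open Real Set

lemma integrable_exp_neg_sq_div_two : Integrable fun t : ℝ => exp (-(t ^ 2) / 2) := by
  simpa [neg_div, div_eq_inv_mul] using integrable_exp_neg_mul_sq (by norm_num : (0 : ℝ) < 1 / 2)

lemma integral_exp_neg_sq_div_two : ∫ t : ℝ, exp (-(t ^ 2) / 2) = √(2 * π) := by
  simpa [neg_div, div_eq_inv_mul, div_inv_eq_mul, mul_comm] using integral_gaussian (1 / 2)

lemma stdGaussianCDF_add_stdGaussianCDF_neg (y : ℝ) :
    stdGaussianCDF y + stdGaussianCDF (-y) = 1 := by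
  have hreflect : ∫ t in Iic (-y), exp (-(t ^ 2) / 2) = ∫ t in Ioi y, exp (-(t ^ 2) / 2) := by
    have h := integral_comp_neg_Iic (-y) fun t : ℝ => exp (-(t ^ 2) / 2)
    simp only [neg_sq, neg_neg] at h
    exact h
  have hsplit := intervalIntegral.integral_Iic_add_Ioi (b := y)
    integrable_exp_neg_sq_div_two.integrableOn integrable_exp_neg_sq_div_two.integrableOn
  have hπ : 0 < √(2 * π) := by positivity
  rw [stdGaussianCDF, stdGaussianCDF, ← add_div, hreflect, hsplit, integral_exp_neg_sq_div_two,
    div_self hπ.ne']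

lemma mul_sub_le_stdGaussianCDF_sub {K a b : ℝ} (hab : a ≤ b) (ha : -K ≤ a) (hb : b ≤ K) :
    exp (-(K ^ 2) / 2) / √(2 * π) * (b - a) ≤ stdGaussianCDF b - stdGaussianCDF a := by
  have hdensity : ∀ t ∈ Icc a b, exp (-(K ^ 2) / 2) ≤ exp (-(t ^ 2) / 2) := fun t ht => by
    have : t ^ 2 ≤ K ^ 2 := sq_le_sq' (by linarith [ht.1]) (by linarith [ht.2])
    gcongr
  have hintegral : exp (-(K ^ 2) / 2) * (b - a) ≤ ∫ t in a..b, exp (-(t ^ 2) / 2) := by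
    simpa [mul_comm] using intervalIntegral.integral_mono_on hab intervalIntegrable_const
      (integrable_exp_neg_sq_div_two.intervalIntegrable) hdensity
  rw [stdGaussianCDF, stdGaussianCDF, ← sub_div, intervalIntegral.integral_Iic_sub_Iic
    integrable_exp_neg_sq_div_two.integrableOn integrable_exp_neg_sq_div_two.integrableOn,
    div_mul_eq_mul_div]
  gcongr

theorem gaussian_cdf_pair_lower_bound_general (K : ℝ) :
    ∃ f : ℝ, 0 < f ∧ ∀ x y : ℝ, |x| ≤ K → |y| ≤ K → 0 ≤ x + y →
      stdGaussianCDF x + stdGaussianCDF y ≥ 1 + f * (x + y) := by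
  refine ⟨exp (-(K ^ 2) / 2) / √(2 * π), by positivity, fun x y hx hy hxy => ?_⟩
  have hincrement := mul_sub_le_stdGaussianCDF_sub (K := K) (a := -y) (b := x)
    (by linarith) (neg_le_neg (abs_le.mp hy).2) (abs_le.mp hx).2
  have hsymm := stdGaussianCDF_add_stdGaussianCDF_neg y
  rw [sub_neg_eq_add] at hincrement
  linarith

theorem gaussian_cdf_pair_lower_bound (K : ℝ) (hK : 0 < K) :
    ∃ f : ℝ, 0 < f ∧ ∀ x y : ℝ, |x| ≤ K → |y| ≤ K → 0 ≤ x + y →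
      stdGaussianCDF x + stdGaussianCDF y ≥ 1 + f * (x + y) :=
  gaussian_cdf_pair_lower_bound_general K
end

section
/- Let Z⁺ and Z⁻ be independent copies of Bin(m, p) with m ≥ 1 and 0 < p ≤ 1/2. Then P(Z⁺ = Z⁻) ≤ 4/√(mp). -/
/-!
The collision probability `∑ₖ P(Z = k)²` is at most `maxₖ P(Z = k)`, and the binomial mass is
unimodal with peak at `k₀ = ⌊(m + 1) p⌋`, as the ratio of consecutive terms shows. At any
`0 < k < m`, maximising `p ↦ pᵏ (1 - p)ᵐ⁻ᵏ` at `p = k / m` and Stirling's two-sided bound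
`√π ≤ n! / (√(2n) (n / e)ⁿ) ≤ e / √2` give `P(Z = k) ≤ √(m / (2 k (m - k)))`. At the peak
`k₀ ≥ mp / 2` and `m - k₀ ≥ m / 4` once `mp > 16`, which yields `4 / √(mp)`; for `mp ≤ 16` the
bound exceeds `1` and there is nothing to prove.
-/

open Finset Real
open scoped Nat

theorem Finset.sum_sq_le_mul_sum {ι R : Type*} [CommSemiring R] [PartialOrder R]
    [IsOrderedRing R] {s : Finset ι} {f : ι → R} {M : R}
    (hf : ∀ i ∈ s, 0 ≤ f i) (hM : ∀ i ∈ s, f i ≤ M) :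
    ∑ i ∈ s, f i ^ 2 ≤ M * ∑ i ∈ s, f i := by
  rw [mul_sum]
  refine sum_le_sum fun i hi => ?_
  rw [sq]
  exact mul_le_mul_of_nonneg_right (hM i hi) (hf i hi)

/-- Weighted AM-GM with natural weights: apply `x ≤ exp (x - 1)` to each factor. -/
theorem pow_mul_pow_le_one {a b : ℝ} {k n : ℕ} (ha : 0 ≤ a) (hb : 0 ≤ b)
    (h : k * a + n * b = k + n) : a ^ k * b ^ n ≤ 1 := by
  have hexp : ∀ x : ℝ, 0 ≤ x → ∀ j : ℕ, x ^ j ≤ exp (j * (x - 1)) := fun x hx j => by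
    rw [mul_comm, exp_mul, rpow_natCast]
    exact pow_le_pow_left₀ hx (by linarith [add_one_le_exp (x - 1)]) j
  calc a ^ k * b ^ n ≤ exp (k * (a - 1)) * exp (n * (b - 1)) :=
        mul_le_mul (hexp a ha k) (hexp b hb n) (by positivity) (by positivity)
    _ = 1 := by rw [← exp_add, exp_eq_one_iff]; linarith

theorem pow_mul_one_sub_pow_mul_le {p : ℝ} (hp0 : 0 ≤ p) (hp1 : p ≤ 1) {k n : ℕ}
    (hk : k ≠ 0) (hn : n ≠ 0) :
    p ^ k * (1 - p) ^ n * ((k + n : ℕ) : ℝ) ^ (k + n) ≤ (k : ℝ) ^ k * (n : ℝ) ^ n := by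
  set N : ℝ := ((k + n : ℕ) : ℝ)
  have hkR : (0 : ℝ) < k := by positivity
  have hnR : (0 : ℝ) < n := by positivity
  have hq : 0 ≤ 1 - p := by linarith
  have key := pow_mul_pow_le_one (k := k) (n := n) (a := N * p / k) (b := N * (1 - p) / n)
    (by positivity) (by positivity) (by simp only [N]; field_simp; push_cast; ring)
  calc p ^ k * (1 - p) ^ n * N ^ (k + n)
      = (N * p / k) ^ k * (N * (1 - p) / n) ^ n * ((k : ℝ) ^ k * (n : ℝ) ^ n) := by
        rw [div_pow, div_pow, mul_pow, mul_pow, pow_add]; field_simp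
    _ ≤ 1 * ((k : ℝ) ^ k * (n : ℝ) ^ n) := by gcongr
    _ = _ := one_mul _

namespace Stirling

theorem stirlingSeq_le_exp_one_div_sqrt_two {n : ℕ} (hn : n ≠ 0) :
    stirlingSeq n ≤ exp 1 / √2 := by
  obtain ⟨j, rfl⟩ := Nat.exists_eq_add_one_of_ne_zero hn
  rw [← stirlingSeq_one]
  exact stirlingSeq'_antitone (Nat.zero_le j)

theorem stirlingSeq_add_le_mul {k n : ℕ} (hk : k ≠ 0) (hn : n ≠ 0) :
    stirlingSeq (k + n) ≤ stirlingSeq k * stirlingSeq n := by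
  have he : exp 1 / √2 ≤ π := by
    have : 1 ≤ √2 := by rw [show (1 : ℝ) = √1 by simp]; exact sqrt_le_sqrt (by norm_num)
    calc exp 1 / √2 ≤ exp 1 := div_le_self (exp_pos 1).le this
      _ ≤ π := by linarith [exp_one_lt_d9, pi_gt_three]
  calc stirlingSeq (k + n) ≤ exp 1 / √2 := stirlingSeq_le_exp_one_div_sqrt_two (by omega)
    _ ≤ √π * √π := by rwa [mul_self_sqrt pi_pos.le]
    _ ≤ stirlingSeq k * stirlingSeq n :=
        mul_le_mul (sqrt_pi_le_stirlingSeq hk) (sqrt_pi_le_stirlingSeq hn) (sqrt_nonneg _)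
          ((sqrt_nonneg _).trans (sqrt_pi_le_stirlingSeq hk))

theorem factorial_eq_stirlingSeq_mul {n : ℕ} (hn : n ≠ 0) :
    (n ! : ℝ) = stirlingSeq n * (√(2 * n) * (n / exp 1) ^ n) := by
  have : 0 < √(2 * n) * (n / exp 1) ^ n := by positivity
  rw [stirlingSeq, div_mul_cancel₀ _ this.ne']

end Stirling

open Stirling in
theorem choose_mul_pow_mul_pow_le {k n : ℕ} (hk : k ≠ 0) (hn : n ≠ 0) :
    ((k + n).choose k : ℝ) * (k : ℝ) ^ k * (n : ℝ) ^ n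
      ≤ √(((k + n : ℕ) : ℝ) / (2 * k * n)) * ((k + n : ℕ) : ℝ) ^ (k + n) := by
  set F : ℕ → ℝ := fun j => √(2 * j) * (j / exp 1) ^ j with hF
  have hsk : 0 < stirlingSeq k := (sqrt_pos.2 pi_pos).trans_le (sqrt_pi_le_stirlingSeq hk)
  have hsn : 0 < stirlingSeq n := (sqrt_pos.2 pi_pos).trans_le (sqrt_pi_le_stirlingSeq hn)
  have hchoose : ((k + n).choose k : ℝ) * F k * F n ≤ F (k + n) := by
    have hfac : ((k + n)! : ℝ) = (k + n).choose k * k ! * n ! := by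
      have := Nat.choose_mul_factorial_mul_factorial (Nat.le_add_right k n)
      rw [Nat.add_sub_cancel_left] at this
      exact_mod_cast this.symm
    rw [factorial_eq_stirlingSeq_mul hk, factorial_eq_stirlingSeq_mul hn,
      factorial_eq_stirlingSeq_mul (by omega)] at hfac
    refine le_of_mul_le_mul_left (a := stirlingSeq k * stirlingSeq n) ?_ (by positivity)
    calc stirlingSeq k * stirlingSeq n * ((k + n).choose k * F k * F n)
        = stirlingSeq (k + n) * F (k + n) := by rw [hfac]; ring
      _ ≤ stirlingSeq k * stirlingSeq n * F (k + n) :=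
        mul_le_mul_of_nonneg_right (stirlingSeq_add_le_mul hk hn) (by positivity)
  have hsqrt : √(((k + n : ℕ) : ℝ) / (2 * k * n)) * (√(2 * k) * √(2 * n))
      = √(2 * ((k + n : ℕ) : ℝ)) := by
    rw [← sqrt_mul (by positivity), ← sqrt_mul (by positivity)]
    congr 1
    field_simp
  refine le_of_mul_le_mul_right (a := √(2 * k) * √(2 * n) / exp 1 ^ (k + n)) ?_ (by positivity)
  calc ((k + n).choose k : ℝ) * (k : ℝ) ^ k * (n : ℝ) ^ n
        * (√(2 * k) * √(2 * n) / exp 1 ^ (k + n))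
      = (k + n).choose k * F k * F n := by
        simp only [hF, div_pow, pow_add]; field_simp
    _ ≤ F (k + n) := hchoose
    _ = _ := by
        simp only [hF, div_pow]; rw [← hsqrt]; field_simp

noncomputable def binomialMass (m : ℕ) (p : ℝ) (k : ℕ) : ℝ :=
  (m.choose k : ℝ) * p ^ k * (1 - p) ^ (m - k)

namespace binomialMass

variable {m : ℕ} {p : ℝ}

theorem nonneg (hp0 : 0 ≤ p) (hp1 : p ≤ 1) (k : ℕ) : 0 ≤ binomialMass m p k := by
  have : 0 ≤ 1 - p := by linarith
  unfold binomialMass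
  positivity

theorem eq_zero_of_lt {k : ℕ} (hk : m < k) : binomialMass m p k = 0 := by
  simp [binomialMass, Nat.choose_eq_zero_of_lt hk]

theorem sum_range_succ_eq_one : ∑ k ∈ range (m + 1), binomialMass m p k = 1 := by
  have h := add_pow p (1 - p) m
  rw [add_sub_cancel, one_pow] at h
  rw [h]
  refine sum_congr rfl fun k _ => ?_
  unfold binomialMass
  ring

theorem le_one (hp0 : 0 ≤ p) (hp1 : p ≤ 1) (k : ℕ) : binomialMass m p k ≤ 1 := by
  rcases le_or_gt k m with hk | hk
  · rw [← sum_range_succ_eq_one (m := m) (p := p)]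
    exact single_le_sum (fun i _ => nonneg hp0 hp1 i) (mem_range_succ_iff.2 hk)
  · rw [eq_zero_of_lt hk]
    exact zero_le_one

theorem succ_mul {k : ℕ} (hk : k < m) :
    binomialMass m p (k + 1) * ((k + 1) * (1 - p)) = binomialMass m p k * ((m - k) * p) := by
  have hchoose : (m.choose (k + 1) : ℝ) * (k + 1) = m.choose k * (m - k) := by
    have := congrArg (Nat.cast (R := ℝ)) (Nat.choose_succ_right_eq m k)
    push_cast [Nat.cast_sub hk.le] at this
    exact this
  unfold binomialMass
  rw [show m - k = m - (k + 1) + 1 by omega, pow_succ, pow_succ]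
  linear_combination p ^ k * (1 - p) ^ (m - (k + 1)) * p * (1 - p) * hchoose

theorem le_succ (hp0 : 0 ≤ p) (hp1 : p < 1) {k : ℕ} (hkm : k < m)
    (hmode : k + 1 ≤ (m + 1) * p) : binomialMass m p k ≤ binomialMass m p (k + 1) := by
  refine le_of_mul_le_mul_right ?_ (mul_pos (by positivity) (by linarith) :
    0 < ((k : ℝ) + 1) * (1 - p))
  rw [succ_mul hkm]
  exact mul_le_mul_of_nonneg_left (by linarith) (nonneg hp0 hp1.le k)

theorem succ_le (hp0 : 0 ≤ p) (hp1 : p < 1) {k : ℕ} (hmode : (m + 1) * p ≤ k + 1) :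
    binomialMass m p (k + 1) ≤ binomialMass m p k := by
  rcases lt_or_ge k m with hkm | hmk
  · refine le_of_mul_le_mul_right ?_ (mul_pos (by positivity) (by linarith) :
      0 < ((k : ℝ) + 1) * (1 - p))
    rw [succ_mul hkm]
    exact mul_le_mul_of_nonneg_left (by linarith) (nonneg hp0 hp1.le k)
  · rw [eq_zero_of_lt (Nat.lt_succ_of_le hmk)]
    exact nonneg hp0 hp1.le k

theorem monotoneOn (hp0 : 0 ≤ p) (hp1 : p < 1) :
    MonotoneOn (binomialMass m p) (Set.Iic ⌊(m + 1) * p⌋₊) := by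
  refine monotoneOn_of_le_succ Set.ordConnected_Iic fun k _ _ hk => ?_
  rw [Order.succ_eq_add_one] at hk ⊢
  have hmode : ((k + 1 : ℕ) : ℝ) ≤ (m + 1) * p :=
    (Nat.cast_le.2 (Set.mem_Iic.1 hk)).trans (Nat.floor_le (by positivity))
  push_cast at hmode
  have hkm : (k : ℝ) < m := by nlinarith
  exact le_succ hp0 hp1 (by exact_mod_cast hkm) hmode

theorem antitoneOn (hp0 : 0 ≤ p) (hp1 : p < 1) :
    AntitoneOn (binomialMass m p) (Set.Ici ⌊(m + 1) * p⌋₊) := by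
  refine antitoneOn_of_succ_le Set.ordConnected_Ici fun k _ hk _ => ?_
  rw [Order.succ_eq_add_one]
  refine succ_le hp0 hp1 ((Nat.lt_floor_add_one _).le.trans ?_)
  exact_mod_cast Nat.succ_le_succ (Set.mem_Ici.1 hk)

theorem le_floor (hp0 : 0 ≤ p) (hp1 : p < 1) (k : ℕ) :
    binomialMass m p k ≤ binomialMass m p ⌊(m + 1) * p⌋₊ := by
  rcases le_total k ⌊(m + 1) * p⌋₊ with hk | hk
  · exact monotoneOn hp0 hp1 hk (Set.mem_Iic.2 le_rfl) hk
  · exact antitoneOn hp0 hp1 (Set.mem_Ici.2 le_rfl) hk hk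

theorem le_sqrt (hp0 : 0 ≤ p) (hp1 : p ≤ 1) {k : ℕ} (hk : k ≠ 0) (hkm : k < m) :
    binomialMass m p k ≤ √(m / (2 * k * (m - k))) := by
  obtain ⟨n, rfl⟩ := Nat.exists_eq_add_of_le hkm.le
  have hn : n ≠ 0 := by omega
  rw [show ((k + n : ℕ) : ℝ) - k = n by push_cast; ring]
  refine le_of_mul_le_mul_right ?_ (by positivity : (0 : ℝ) < ((k + n : ℕ) : ℝ) ^ (k + n))
  calc binomialMass (k + n) p k * ((k + n : ℕ) : ℝ) ^ (k + n)
      = ((k + n).choose k : ℝ) * (p ^ k * (1 - p) ^ n * ((k + n : ℕ) : ℝ) ^ (k + n)) := by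
        rw [binomialMass, Nat.add_sub_cancel_left]; ring
    _ ≤ ((k + n).choose k : ℝ) * ((k : ℝ) ^ k * (n : ℝ) ^ n) :=
        mul_le_mul_of_nonneg_left (pow_mul_one_sub_pow_mul_le hp0 hp1 hk hn) (by positivity)
    _ ≤ _ := by rw [← mul_assoc]; exact choose_mul_pow_mul_pow_le hk hn

theorem floor_le_four_div_sqrt (hp0 : 0 < p) (hp1 : p ≤ 1 / 2) (hmp : 16 < (m : ℝ) * p) :
    binomialMass m p ⌊(m + 1) * p⌋₊ ≤ 4 / √(m * p) := by
  set k₀ := ⌊(m + 1) * p⌋₊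
  have hm : (32 : ℝ) < m := by nlinarith
  have hk₀lo : (m : ℝ) * p / 2 ≤ k₀ := by nlinarith [Nat.lt_floor_add_one ((m + 1) * p)]
  have hk₀hi : (m : ℝ) / 4 ≤ m - k₀ := by
    nlinarith [Nat.floor_le (by positivity : (0 : ℝ) ≤ (m + 1) * p)]
  have hk₀ : (0 : ℝ) < k₀ := by linarith
  calc binomialMass m p k₀ ≤ √(m / (2 * k₀ * (m - k₀))) :=
        le_sqrt hp0.le (by linarith) (Nat.cast_pos.1 hk₀).ne'
          (Nat.cast_lt.1 (by linarith : (k₀ : ℝ) < m))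
    _ ≤ √(16 / (m * p)) := by
        refine sqrt_le_sqrt ((div_le_div_iff₀ (by nlinarith) (by linarith)).2 ?_)
        nlinarith [mul_le_mul hk₀lo hk₀hi (by positivity) hk₀.le]
    _ = 4 / √(m * p) := by rw [sqrt_div (by norm_num), show √16 = (4 : ℝ) by norm_num]

end binomialMass

open Finset in
theorem binomial_collision_prob_le (m : ℕ) (hm : 1 ≤ m) (p : ℝ) (hp0 : 0 < p)
    (hp1 : p ≤ 1 / 2) :
    ∑ k ∈ Finset.range (m + 1),
      ((m.choose k : ℝ) * p ^ k * (1 - p) ^ (m - k)) ^ 2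
      ≤ 4 / Real.sqrt (m * p) := by
  have hp : p < 1 := by linarith
  have hmax : ∑ k ∈ range (m + 1), binomialMass m p k ^ 2 ≤ binomialMass m p ⌊(m + 1) * p⌋₊ := by
    have h := sum_sq_le_mul_sum (s := range (m + 1)) (f := binomialMass m p)
      (fun k _ => binomialMass.nonneg hp0.le hp.le k) (fun k _ => binomialMass.le_floor hp0.le hp k)
    rwa [binomialMass.sum_range_succ_eq_one, mul_one] at h
  refine hmax.trans ?_
  rcases le_or_gt ((m : ℝ) * p) 16 with hsmall | hlarge
  · have hmp : 0 < (m : ℝ) * p := mul_pos (by exact_mod_cast hm) hp0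
    calc binomialMass m p ⌊(m + 1) * p⌋₊ ≤ 1 := binomialMass.le_one hp0.le hp.le _
      _ ≤ 4 / √(m * p) := by
          rw [one_le_div (by positivity), show (4 : ℝ) = √16 by norm_num]
          exact sqrt_le_sqrt hsmall
  · exact binomialMass.floor_le_four_div_sqrt hp0 hp1 hlarge
end
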